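/- Let n, m be positive integers. Let W := { (R^T Λ_m(0) + Λ_n(0) S, R^T Δ_m + Δ_n S) : S ∈ ℂ^{n×m}, R ∈ ℂ^{m×n} } ⊆ ℂ^{n×m} × ℂ^{n×m}, and let P := { (X, 0) : X ∈ ℂ^{n×m}, X_{ij} = 0 unless j = 1 and i ≤ min(n,m) }. Then ℂ^{n×m} × ℂ^{n×m} = W ⊕ P. -/

import Mathlib

open Matrix

noncomputable section

/-- `Λ_n(λ)`: the `n × n` matrix with `(i,j)` entry `λ` if `i + j = n + 1`, `1` if
`i + j = n + 2`, and `0` otherwise (1-based indices). -/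
def lamM (n : ℕ) (lam : ℂ) : Matrix (Fin n) (Fin n) ℂ :=
  Matrix.of fun i j =>
    if (i : ℕ) + 1 + ((j : ℕ) + 1) = n + 1 then lam
    else if (i : ℕ) + 1 + ((j : ℕ) + 1) = n + 2 then 1 else 0

/-- `Δ_n`: the `n × n` matrix with `(i,j)` entry `1` if `i + j = n + 1` and `0`
otherwise (1-based indices). -/
def delM (n : ℕ) : Matrix (Fin n) (Fin n) ℂ :=
  Matrix.of fun i j => if (i : ℕ) + 1 + ((j : ℕ) + 1) = n + 1 then 1 else 0

/-- `F_n`: the `n × (n+1)` matrix with `F_n(i,j) = 1` exactly when `j = i`. -/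
def FM (n : ℕ) : Matrix (Fin n) (Fin (n + 1)) ℂ :=
  Matrix.of fun i j => if (j : ℕ) = (i : ℕ) then 1 else 0

/-- `G_n`: the `n × (n+1)` matrix with `G_n(i,j) = 1` exactly when `j = i + 1`. -/
def GM (n : ℕ) : Matrix (Fin n) (Fin (n + 1)) ℂ :=
  Matrix.of fun i j => if (j : ℕ) = (i : ℕ) + 1 then 1 else 0

/-- `L_n^{(1)} = [[0, F_nᵀ], [F_n, 0]]`, a symmetric `(2n+1) × (2n+1)` matrix. -/
def L1M (n : ℕ) : Matrix (Fin (2 * n + 1)) (Fin (2 * n + 1)) ℂ :=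
  Matrix.reindex (finSumFinEquiv.trans (finCongr (by omega)))
    (finSumFinEquiv.trans (finCongr (by omega)))
    (Matrix.fromBlocks 0 (FM n)ᵀ (FM n) 0)

/-- `L_n^{(2)} = [[0, G_nᵀ], [G_n, 0]]`, a symmetric `(2n+1) × (2n+1)` matrix. -/
def L2M (n : ℕ) : Matrix (Fin (2 * n + 1)) (Fin (2 * n + 1)) ℂ :=
  Matrix.reindex (finSumFinEquiv.trans (finCongr (by omega)))
    (finSumFinEquiv.trans (finCongr (by omega)))
    (Matrix.fromBlocks 0 (GM n)ᵀ (GM n) 0)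

theorem lamM_isSymm (n : ℕ) (lam : ℂ) : (lamM n lam).IsSymm := by
  unfold Matrix.IsSymm lamM
  ext i j
  simp only [Matrix.transpose_apply, Matrix.of_apply]
  split_ifs <;> first | rfl | omega

theorem delM_isSymm (n : ℕ) : (delM n).IsSymm := by
  unfold Matrix.IsSymm delM
  ext i j
  simp only [Matrix.transpose_apply, Matrix.of_apply]
  split_ifs <;> first | rfl | omega

theorem L1M_isSymm (n : ℕ) : (L1M n).IsSymm := by
  unfold Matrix.IsSymm L1M
  rw [Matrix.transpose_reindex, Matrix.fromBlocks_transpose]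
  simp

theorem L2M_isSymm (n : ℕ) : (L2M n).IsSymm := by
  unfold Matrix.IsSymm L2M
  rw [Matrix.transpose_reindex, Matrix.fromBlocks_transpose]
  simp

/-- The type of canonical summands: `H_k(λ)`, `K_k`, `L_k`. -/
inductive CanType where
  | H : ℕ → ℂ → CanType
  | K : ℕ → CanType
  | L : ℕ → CanType

/-- The size of a canonical pair. -/
def CanType.size : CanType → ℕ
  | .H k _ => k
  | .K k => k
  | .L k => 2 * k + 1

/-- The size parameter of a canonical pair. -/
def CanType.param : CanType → ℕ
  | .H k _ => k
  | .K k => k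
  | .L k => k

/-- The first matrix of a canonical pair. -/
def CanType.A : (c : CanType) → Matrix (Fin c.size) (Fin c.size) ℂ
  | .H k _ => delM k
  | .K k => lamM k 0
  | .L k => L1M k

/-- The second matrix of a canonical pair. -/
def CanType.B : (c : CanType) → Matrix (Fin c.size) (Fin c.size) ℂ
  | .H k lam => lamM k lam
  | .K k => delM k
  | .L k => L2M k

/-- Congruence of pairs of square complex matrices (over possibly different index
types): `(A', B') = (Sᵀ A S, Sᵀ B S)` for some invertible `S`. -/
def CongruentPairs {ι κ : Type} [Fintype ι] [Fintype κ] [DecidableEq ι] [DecidableEq κ]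
    (p : Matrix ι ι ℂ × Matrix ι ι ℂ) (q : Matrix κ κ ℂ × Matrix κ κ ℂ) : Prop :=
  ∃ S : Matrix ι κ ℂ, (∃ T : Matrix κ ι ℂ, S * T = 1 ∧ T * S = 1) ∧
    q.1 = Sᵀ * p.1 * S ∧ q.2 = Sᵀ * p.2 * S

/-- The linear map `(S, R) ↦ (Rᵀ A_j + A_i S, Rᵀ B_j + B_i S)`. -/
def offMap {ι κ : Type} [Fintype ι] [Fintype κ] (Ai Bi : Matrix ι ι ℂ)
    (Aj Bj : Matrix κ κ ℂ) :
    (Matrix ι κ ℂ × Matrix κ ι ℂ) →ₗ[ℂ] (Matrix ι κ ℂ × Matrix ι κ ℂ) where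
  toFun SR := (SR.2ᵀ * Aj + Ai * SR.1, SR.2ᵀ * Bj + Bi * SR.1)
  map_add' x y := by
    simp only [Prod.fst_add, Prod.snd_add, Matrix.transpose_add, Matrix.add_mul,
      Matrix.mul_add, Prod.mk_add_mk, Prod.ext_iff]
    constructor <;> abel
  map_smul' c x := by
    simp only [Prod.smul_fst, Prod.smul_snd, Matrix.transpose_smul, Matrix.smul_mul,
      Matrix.mul_smul, RingHom.id_apply, Prod.smul_mk, smul_add]

/-- `W = {(Rᵀ A_j + A_i S, Rᵀ B_j + B_i S) : S, R}`. -/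
def WSpace {ι κ : Type} [Fintype ι] [Fintype κ] (Ai Bi : Matrix ι ι ℂ)
    (Aj Bj : Matrix κ κ ℂ) : Submodule ℂ (Matrix ι κ ℂ × Matrix ι κ ℂ) :=
  LinearMap.range (offMap Ai Bi Aj Bj)

/-- The space of pairs of (rectangular) matrices supported on given sets of positions. -/
def entryPattern {ι κ : Type} (S1 S2 : Set (ι × κ)) :
    Submodule ℂ (Matrix ι κ ℂ × Matrix ι κ ℂ) where
  carrier := {x | (∀ i j, (i, j) ∉ S1 → x.1 i j = 0) ∧ (∀ i j, (i, j) ∉ S2 → x.2 i j = 0)}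
  add_mem' := by
    rintro a b ⟨ha1, ha2⟩ ⟨hb1, hb2⟩
    exact ⟨fun i j h => by show a.1 i j + b.1 i j = 0; rw [ha1 i j h, hb1 i j h, add_zero],
      fun i j h => by show a.2 i j + b.2 i j = 0; rw [ha2 i j h, hb2 i j h, add_zero]⟩
  zero_mem' := ⟨fun _ _ _ => rfl, fun _ _ _ => rfl⟩
  smul_mem' := by
    rintro c a ⟨ha1, ha2⟩
    exact ⟨fun i j h => by show c * a.1 i j = 0; rw [ha1 i j h, mul_zero],
      fun i j h => by show c * a.2 i j = 0; rw [ha2 i j h, mul_zero]⟩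


end

noncomputable section

/-! Write `e i j` for the matrix unit `singleNat i j`, read as `0` when `(i, j)` is out of range.
The images of matrix units under `(S, R) ↦ (Rᵀ Λ_m(0) + Λ_n(0) S, Rᵀ Δ_m + Δ_n S)` are exactly the
pairs `(e (i+1) j, e i j)` and `(e i (j+1), e i j)`. Modulo `W` this gives
`(0, e i j) ≡ -(e (i+1) j, 0)` and `(e i (j+1), 0) ≡ (e (i+1) j, 0)`, so every pair is congruent to
some `(e s 0, 0)`, where `s = i + j` indexes an anti-diagonal. For `s ≥ min n m` that anti-diagonal
reaches the last row or column, where the class vanishes; for `s < min n m`, `(e s 0, 0) ∈ P`.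
Conversely, for `s < min n m` the functional "sum of `X` over anti-diagonal `s` minus sum of `Y`
over anti-diagonal `s - 1`" kills every generator of `W`, while on `P` it reads off the entry
`X s 0`; hence `W ∩ P = 0`. -/

namespace Matrix

variable {α : Type*}

theorem mul_single_one_apply {l k p : Type*} [Fintype k] [DecidableEq k] [DecidableEq p]
    [NonAssocSemiring α] (M : Matrix l k α) (a : k) (b : p) (i : l) (j : p) :
    (M * single a b (1 : α)) i j = if j = b then M i a else 0 := by
  split_ifs with h
  · rw [h, mul_single_apply_same, mul_one]
  · exact mul_single_apply_of_ne _ _ _ _ _ h M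

theorem single_one_mul_apply {l k p : Type*} [Fintype k] [DecidableEq k] [DecidableEq l]
    [NonAssocSemiring α] (M : Matrix k p α) (a : l) (b : k) (i : l) (j : p) :
    (single a b (1 : α) * M) i j = if i = a then M b j else 0 := by
  split_ifs with h
  · rw [h, single_mul_apply_same, one_mul]
  · exact single_mul_apply_of_ne _ _ _ _ _ h M

theorem single_eq_smul_single_one {ι κ : Type*} [DecidableEq ι] [DecidableEq κ]
    [MulZeroOneClass α] (i : ι) (j : κ) (c : α) : single i j c = c • single i j (1 : α) := by
  rw [smul_single, smul_eq_mul, mul_one]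

theorem submodule_eq_top_of_single_mem {ι κ : Type*} [Fintype ι] [Fintype κ] [DecidableEq ι]
    [DecidableEq κ] [Semiring α] (Q : Submodule α (Matrix ι κ α))
    (h : ∀ i j, single i j 1 ∈ Q) : Q = ⊤ := by
  refine Submodule.eq_top_iff'.2 fun X => ?_
  induction X using Matrix.induction_on' with
  | h_zero => exact Q.zero_mem
  | h_add X X' hX hX' => exact Q.add_mem hX hX'
  | h_std_basis i j c => exact single_eq_smul_single_one i j c ▸ Q.smul_mem c (h i j)

theorem prod_submodule_eq_top_of_single_mem {ι κ ι' κ' : Type*} [Fintype ι] [Fintype κ]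
    [Fintype ι'] [Fintype κ'] [DecidableEq ι] [DecidableEq κ] [DecidableEq ι'] [DecidableEq κ']
    [Semiring α] (Q : Submodule α (Matrix ι κ α × Matrix ι' κ' α))
    (h₁ : ∀ i j, (single i j 1, 0) ∈ Q) (h₂ : ∀ i j, (0, single i j 1) ∈ Q) : Q = ⊤ := by
  have hinl := submodule_eq_top_of_single_mem (Q.comap (LinearMap.inl α _ _)) h₁
  have hinr := submodule_eq_top_of_single_mem (Q.comap (LinearMap.inr α _ _)) h₂
  refine Submodule.eq_top_iff'.2 fun ⟨X, Y⟩ => ?_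
  rw [← add_zero X, ← zero_add Y, ← Prod.mk_add_mk]
  exact Q.add_mem (Submodule.eq_top_iff'.1 hinl X) (Submodule.eq_top_iff'.1 hinr Y)

variable {n m : ℕ}

def singleNat [Zero α] [One α] (i j : ℕ) : Matrix (Fin n) (Fin m) α :=
  of fun a b => if (a : ℕ) = i ∧ (b : ℕ) = j then 1 else 0

section singleNat

variable [Zero α] [One α]

theorem singleNat_apply (i j : ℕ) (a : Fin n) (b : Fin m) :
    (singleNat i j : Matrix (Fin n) (Fin m) α) a b = if (a : ℕ) = i ∧ (b : ℕ) = j then 1 else 0 :=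
  rfl

theorem singleNat_coe (i : Fin n) (j : Fin m) :
    (singleNat i j : Matrix (Fin n) (Fin m) α) = single i j 1 := by
  ext a b
  simp [singleNat_apply, single_apply, Fin.val_inj, eq_comm]

theorem singleNat_eq_zero {i j : ℕ} (h : ¬(i < n ∧ j < m)) :
    (singleNat i j : Matrix (Fin n) (Fin m) α) = 0 := by
  ext a b
  rw [singleNat_apply, if_neg (by omega), zero_apply]

end singleNat

theorem sum_sum_ite_singleNat [AddCommMonoidWithOne α] (P : ℕ → ℕ → Prop) [DecidableRel P]
    (i j : ℕ) :
    ∑ a : Fin n, ∑ b : Fin m, (if P a b then (singleNat i j : Matrix _ _ α) a b else 0) =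
      if i < n ∧ j < m ∧ P i j then 1 else 0 := by
  by_cases h : i < n ∧ j < m
  · rw [show singleNat i j = single (⟨i, h.1⟩ : Fin n) (⟨j, h.2⟩ : Fin m) (1 : α) from
      singleNat_coe (⟨i, h.1⟩ : Fin n) (⟨j, h.2⟩ : Fin m),
      Fintype.sum_eq_single ⟨i, h.1⟩ fun a ha => ?_, Fintype.sum_eq_single ⟨j, h.2⟩ fun b hb => ?_]
    · simp [h]
    · simp [Ne.symm hb]
    · simp [Ne.symm ha]
  · rw [singleNat_eq_zero h, if_neg (by tauto)]
    simp

end Matrix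

open Matrix

variable {n m : ℕ}

theorem offMap_single_zero (a : Fin n) (b : Fin m) :
    offMap (lamM n 0) (delM n) (lamM m 0) (delM m) (single a b 1, 0) =
      (singleNat (n - a) b, singleNat (n - 1 - a) b) := by
  have := a.isLt
  simp only [offMap, LinearMap.coe_mk, AddHom.coe_mk, transpose_zero, Matrix.zero_mul, zero_add,
    Prod.mk.injEq]
  constructor <;> ext i j <;>
    simp only [mul_single_one_apply, lamM, delM, of_apply, singleNat_apply, Fin.ext_iff] <;>
    split_ifs <;> first | rfl | omega

theorem offMap_zero_single (a : Fin m) (b : Fin n) :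
    offMap (lamM n 0) (delM n) (lamM m 0) (delM m) (0, single a b 1) =
      (singleNat b (m - a), singleNat b (m - 1 - a)) := by
  have := a.isLt
  simp only [offMap, LinearMap.coe_mk, AddHom.coe_mk, transpose_single, Matrix.mul_zero, add_zero,
    Prod.mk.injEq]
  constructor <;> ext i j <;>
    simp only [single_one_mul_apply, lamM, delM, of_apply, singleNat_apply, Fin.ext_iff] <;>
    split_ifs <;> first | rfl | omega

abbrev wKK (n m : ℕ) : Submodule ℂ (Matrix (Fin n) (Fin m) ℂ × Matrix (Fin n) (Fin m) ℂ) :=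
  WSpace (lamM n 0) (delM n) (lamM m 0) (delM m)

abbrev pKK (n m : ℕ) : Submodule ℂ (Matrix (Fin n) (Fin m) ℂ × Matrix (Fin n) (Fin m) ℂ) :=
  entryPattern {pq : Fin n × Fin m | (pq.2 : ℕ) = 0 ∧ (pq.1 : ℕ) + 1 ≤ min n m} ∅

theorem singleNat_succ_row_mem_wKK (i j : ℕ) :
    (singleNat (i + 1) j, singleNat i j) ∈ wKK n m := by
  by_cases h : i < n ∧ j < m
  · refine ⟨(single ⟨n - 1 - i, by omega⟩ ⟨j, h.2⟩ 1, 0), ?_⟩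
    rw [offMap_single_zero]
    simp only [show n - (n - 1 - i) = i + 1 by omega, show n - 1 - (n - 1 - i) = i by omega]
  · rw [singleNat_eq_zero h, singleNat_eq_zero (show ¬(i + 1 < n ∧ j < m) by omega),
      Prod.mk_zero_zero]
    exact zero_mem _

theorem singleNat_succ_col_mem_wKK (i j : ℕ) :
    (singleNat i (j + 1), singleNat i j) ∈ wKK n m := by
  by_cases h : i < n ∧ j < m
  · refine ⟨(0, single ⟨m - 1 - j, by omega⟩ ⟨i, h.1⟩ 1), ?_⟩
    rw [offMap_zero_single]
    simp only [show m - (m - 1 - j) = j + 1 by omega, show m - 1 - (m - 1 - j) = j by omega]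
  · rw [singleNat_eq_zero h, singleNat_eq_zero (show ¬(i < n ∧ j + 1 < m) by omega),
      Prod.mk_zero_zero]
    exact zero_mem _

theorem antidiag_step_mem_wKK (i j : ℕ) :
    (singleNat i (j + 1) - singleNat (i + 1) j, 0) ∈ wKK n m := by
  simpa using sub_mem (singleNat_succ_col_mem_wKK i j) (singleNat_succ_row_mem_wKK i j)

theorem singleNat_sub_singleNat_col_zero_mem_wKK (i j : ℕ) :
    (singleNat i j - singleNat (i + j) 0, 0) ∈ wKK n m := by
  induction j generalizing i with
  | zero =>
    rw [add_zero, sub_self, Prod.mk_zero_zero]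
    exact zero_mem _
  | succ j ih =>
    have h := add_mem (antidiag_step_mem_wKK (n := n) (m := m) i j) (ih (i + 1))
    rwa [Prod.mk_add_mk, sub_add_sub_cancel, add_zero, add_right_comm] at h

theorem singleNat_last_col_mem_wKK (i j : ℕ) (hj : m ≤ j + 1) :
    (singleNat (i + 1) j, 0) ∈ wKK n m := by
  have h := neg_mem (antidiag_step_mem_wKK (n := n) (m := m) i j)
  rwa [singleNat_eq_zero (show ¬(i < n ∧ j + 1 < m) by omega), zero_sub, Prod.neg_mk, neg_neg,
    neg_zero] at h

theorem singleNat_col_zero_mem_sup (s : ℕ) : (singleNat s 0, 0) ∈ wKK n m ⊔ pKK n m := by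
  by_cases hs : s < n ∧ 0 < m
  · by_cases hsm : s < min n m
    · refine Submodule.mem_sup_right ⟨fun a b hab => ?_, fun a b _ => rfl⟩
      change singleNat s 0 a b = 0
      rw [singleNat_apply, if_neg]
      exact fun h => hab ⟨h.2, by simp only; omega⟩
    · refine Submodule.mem_sup_left ?_
      have h := sub_mem (singleNat_last_col_mem_wKK (n := n) (m := m) (s - m) (m - 1) (by omega))
        (singleNat_sub_singleNat_col_zero_mem_wKK (s - m + 1) (m - 1))
      rwa [Prod.mk_sub_mk, sub_sub_cancel, sub_zero, show s - m + 1 + (m - 1) = s by omega] at h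
  · rw [singleNat_eq_zero hs, Prod.mk_zero_zero]
    exact zero_mem _

theorem singleNat_mem_sup (i j : ℕ) : (singleNat i j, 0) ∈ wKK n m ⊔ pKK n m := by
  have h := add_mem
    (Submodule.mem_sup_left (singleNat_sub_singleNat_col_zero_mem_wKK (n := n) (m := m) i j))
    (singleNat_col_zero_mem_sup (i + j))
  rwa [Prod.mk_add_mk, sub_add_cancel, add_zero] at h

theorem wKK_sup_pKK : wKK n m ⊔ pKK n m = ⊤ := by
  refine prod_submodule_eq_top_of_single_mem _ (fun i j => ?_) (fun i j => ?_)
  · rw [← singleNat_coe]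
    exact singleNat_mem_sup i j
  · have h := sub_mem (Submodule.mem_sup_left (singleNat_succ_row_mem_wKK (n := n) (m := m) i j))
      (singleNat_mem_sup (i + 1) j)
    rwa [Prod.mk_sub_mk, sub_self, sub_zero, singleNat_coe] at h

def antidiagDefect (s : ℕ) :
    (Matrix (Fin n) (Fin m) ℂ × Matrix (Fin n) (Fin m) ℂ) →ₗ[ℂ] ℂ where
  toFun p := ∑ a : Fin n, ∑ b : Fin m,
    ((if (a : ℕ) + b = s then p.1 a b else 0) - (if (a : ℕ) + b + 1 = s then p.2 a b else 0))
  map_add' p q := by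
    simp only [Prod.fst_add, Prod.snd_add, Matrix.add_apply, ← Finset.sum_add_distrib]
    refine Finset.sum_congr rfl fun a _ => Finset.sum_congr rfl fun b _ => ?_
    split_ifs <;> ring
  map_smul' c p := by
    simp only [Prod.smul_fst, Prod.smul_snd, Matrix.smul_apply, smul_eq_mul, RingHom.id_apply,
      Finset.mul_sum]
    refine Finset.sum_congr rfl fun a _ => Finset.sum_congr rfl fun b _ => ?_
    split_ifs <;> ring

theorem antidiagDefect_apply (s : ℕ) (p : Matrix (Fin n) (Fin m) ℂ × Matrix (Fin n) (Fin m) ℂ) :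
    antidiagDefect s p = ∑ a : Fin n, ∑ b : Fin m,
      ((if (a : ℕ) + b = s then p.1 a b else 0) - (if (a : ℕ) + b + 1 = s then p.2 a b else 0)) :=
  rfl

theorem antidiagDefect_singleNat (s i j k l : ℕ) :
    antidiagDefect s ((singleNat i j : Matrix (Fin n) (Fin m) ℂ), singleNat k l) =
      (if i < n ∧ j < m ∧ i + j = s then 1 else 0) -
        (if k < n ∧ l < m ∧ k + l + 1 = s then 1 else 0) := by
  rw [antidiagDefect_apply]
  simp only [Finset.sum_sub_distrib, sum_sum_ite_singleNat (fun a b => a + b = s),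
    sum_sum_ite_singleNat (fun a b => a + b + 1 = s)]

theorem wKK_le_ker_antidiagDefect {s : ℕ} (hs : s < min n m) :
    wKK n m ≤ LinearMap.ker (antidiagDefect s) := by
  have h : (LinearMap.ker (antidiagDefect s)).comap
      (offMap (lamM n 0) (delM n) (lamM m 0) (delM m)) = ⊤ := by
    refine prod_submodule_eq_top_of_single_mem _ (fun a b => ?_) (fun a b => ?_) <;>
    · have := a.isLt
      have := b.isLt
      simp only [Submodule.mem_comap, LinearMap.mem_ker, offMap_single_zero, offMap_zero_single,
        antidiagDefect_singleNat]
      split_ifs <;> first | omega | ring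
  rintro _ ⟨x, rfl⟩
  exact Submodule.eq_top_iff'.1 h x

theorem antidiagDefect_of_mem_pKK {p : Matrix (Fin n) (Fin m) ℂ × Matrix (Fin n) (Fin m) ℂ}
    (hp : p ∈ pKK n m) (a : Fin n) (b₀ : Fin m) (hb₀ : (b₀ : ℕ) = 0) :
    antidiagDefect a p = p.1 a b₀ := by
  have hX : ∀ a' (b : Fin m), (b : ℕ) ≠ 0 → p.1 a' b = 0 := fun a' b hb => hp.1 a' b fun h => hb h.1
  have hY : ∀ a' b, p.2 a' b = 0 := fun a' b => hp.2 a' b (Set.notMem_empty _)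
  simp only [antidiagDefect_apply, hY, ite_self, sub_zero]
  rw [Fintype.sum_eq_single a fun a' ha' => ?_, Fintype.sum_eq_single b₀ fun b hb => ?_]
  · rw [if_pos (by omega)]
  · rw [hX a b (by omega), ite_self]
  · refine Finset.sum_eq_zero fun b _ => ?_
    by_cases hb : (b : ℕ) = 0
    · rw [if_neg (by omega)]
    · rw [hX a' b hb, ite_self]

theorem disjoint_wKK_pKK : Disjoint (wKK n m) (pKK n m) := by
  rw [Submodule.disjoint_def]
  rintro ⟨X, Y⟩ hW hP
  refine Prod.ext (ext fun a b => ?_) (ext fun a b => hP.2 a b (Set.notMem_empty _))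
  by_cases hab : (b : ℕ) = 0 ∧ (a : ℕ) + 1 ≤ min n m
  · rw [← antidiagDefect_of_mem_pKK hP a b hab.1]
    exact wKK_le_ker_antidiagDefect (by omega) hW
  · exact hP.1 a b hab

theorem K_K_offdiagonal_general (n m : ℕ) :
    Disjoint (WSpace (lamM n 0) (delM n) (lamM m 0) (delM m))
      (entryPattern
        {pq : Fin n × Fin m | (pq.2 : ℕ) = 0 ∧ (pq.1 : ℕ) + 1 ≤ min n m}
        (∅ : Set (Fin n × Fin m))) ∧
    WSpace (lamM n 0) (delM n) (lamM m 0) (delM m) ⊔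
      entryPattern
        {pq : Fin n × Fin m | (pq.2 : ℕ) = 0 ∧ (pq.1 : ℕ) + 1 ≤ min n m}
        (∅ : Set (Fin n × Fin m)) = ⊤ :=
  ⟨disjoint_wKK_pKK, wKK_sup_pKK⟩

/-- **Off-diagonal blocks `K_n` vs `K_m`.** With
`W = {(Rᵀ Λ_m(0) + Λ_n(0) S, Rᵀ Δ_m + Δ_n S)}` and `P` the pairs `(X, 0)` with `X`
supported on the first column, rows `1, …, min(n,m)`, one has
`ℂ^{n×m} × ℂ^{n×m} = W ⊕ P`. -/
theorem K_K_offdiagonal (n m : ℕ) (hn : 0 < n) (hm : 0 < m) :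
    Disjoint (WSpace (lamM n 0) (delM n) (lamM m 0) (delM m))
      (entryPattern
        {pq : Fin n × Fin m | (pq.2 : ℕ) = 0 ∧ (pq.1 : ℕ) + 1 ≤ min n m}
        (∅ : Set (Fin n × Fin m))) ∧
    WSpace (lamM n 0) (delM n) (lamM m 0) (delM m) ⊔
      entryPattern
        {pq : Fin n × Fin m | (pq.2 : ℕ) = 0 ∧ (pq.1 : ℕ) + 1 ≤ min n m}
        (∅ : Set (Fin n × Fin m)) = ⊤ :=
  K_K_offdiagonal_general n m

end
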